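/- arXiv:2506.05998 — 2 statements merged into one kernel-verified Lean document; each statement's English description precedes it below -/
import Mathlib

section
/- Let N be odd with N ≥ 3, let θ_1 < θ_2 < ... < θ_N be real numbers, let m = (N+1)/2, and let p be an index with p < m. Let V = {1,...,N} \ {p, p+1}. Then the number of voters j ∈ V with (θ_j − θ_{p+1})² < (θ_j − θ_p)² is strictly greater than the number of voters j ∈ V with (θ_j − θ_p)² < (θ_j − θ_{p+1})². That is, if a proposer p strictly left of the median proposes their peak θ_p and agent p+1 deviates by proposing θ_{p+1}, then θ_{p+1} wins the pairwise majority vote among the remaining agents. -/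
/-!
Under quadratic utilities a voter strictly prefers the nearer of two alternatives. Since `q`
is the immediate successor of `p` and `θ` is strictly increasing, every other voter lies
either left of `p` (and prefers `θ p`) or right of `q` (and prefers `θ q`). So the two
camps have `p` and `N - 2 - p` members, and the latter is larger because `p` is left of the
median.
-/

open Finset

section QuadraticLoss

variable {α : Type*} [CommRing α] [LinearOrder α] [IsStrictOrderedRing α] {a b x : α}

theorem sq_sub_lt_sq_sub_of_le_of_lt (hxa : x ≤ a) (hab : a < b) : (x - a) ^ 2 < (x - b) ^ 2 := by
  nlinarith

theorem sq_sub_lt_sq_sub_of_lt_of_le (hab : a < b) (hbx : b ≤ x) : (x - b) ^ 2 < (x - a) ^ 2 := by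
  nlinarith

end QuadraticLoss

theorem CovBy.lt_or_lt_of_ne {ι : Type*} [LinearOrder ι] {p q j : ι} (hpq : p ⋖ q)
    (hjp : j ≠ p) (hjq : j ≠ q) : j < p ∨ q < j := by
  rcases lt_or_gt_of_ne hjp with hlt | hgt
  · exact .inl hlt
  · exact .inr ((hpq.ge_of_gt hgt).lt_of_ne' hjq)

section Neighbours

variable {ι α : Type*} [LinearOrder ι] [Fintype ι] [CommRing α] [LinearOrder α]
  [IsStrictOrderedRing α] {θ : ι → α} {p q : ι}

theorem filter_sdiff_pair_sq_sub_lt_left_eq_Iio [LocallyFiniteOrderBot ι] (hθ : StrictMono θ)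
    (hpq : p ⋖ q) :
    (univ \ {p, q}).filter (fun j => (θ j - θ p) ^ 2 < (θ j - θ q) ^ 2) = Iio p := by
  ext j
  simp only [mem_filter, mem_sdiff, mem_univ, true_and, mem_insert, mem_singleton, not_or,
    mem_Iio]
  refine ⟨fun ⟨⟨hjp, hjq⟩, hcloser⟩ => ?_, fun hjp => ?_⟩
  · refine (hpq.lt_or_lt_of_ne hjp hjq).resolve_right fun hqj => ?_
    exact hcloser.not_gt (sq_sub_lt_sq_sub_of_lt_of_le (hθ hpq.lt) (hθ hqj).le)
  · exact ⟨⟨hjp.ne, (hjp.trans hpq.lt).ne⟩,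
      sq_sub_lt_sq_sub_of_le_of_lt (hθ hjp).le (hθ hpq.lt)⟩

theorem filter_sdiff_pair_sq_sub_lt_right_eq_Ioi [LocallyFiniteOrderTop ι] (hθ : StrictMono θ)
    (hpq : p ⋖ q) :
    (univ \ {p, q}).filter (fun j => (θ j - θ q) ^ 2 < (θ j - θ p) ^ 2) = Ioi q := by
  ext j
  simp only [mem_filter, mem_sdiff, mem_univ, true_and, mem_insert, mem_singleton, not_or,
    mem_Ioi]
  refine ⟨fun ⟨⟨hjp, hjq⟩, hcloser⟩ => ?_, fun hqj => ?_⟩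
  · refine (hpq.lt_or_lt_of_ne hjp hjq).resolve_left fun hjp => ?_
    exact hcloser.not_gt (sq_sub_lt_sq_sub_of_le_of_lt (hθ hjp).le (hθ hpq.lt))
  · exact ⟨⟨(hpq.lt.trans hqj).ne', hqj.ne'⟩,
      sq_sub_lt_sq_sub_of_lt_of_le (hθ hpq.lt) (hθ hqj).le⟩

end Neighbours

theorem Fin.covBy_of_val_eq_add_one {N : ℕ} {p q : Fin N} (hq : (q : ℕ) = p + 1) : p ⋖ q :=
  ⟨Fin.lt_def.2 (by omega), fun c hpc hcq => by rw [Fin.lt_def] at hpc hcq; omega⟩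

theorem stmt12_general (N : ℕ) (θ : Fin N → ℝ) (hθ : StrictMono θ)
    (m : Fin N) (hm : 2 * (m : ℕ) + 1 = N)
    (p q : Fin N) (hp : p < m) (hq : (q : ℕ) = (p : ℕ) + 1) :
    ((Finset.univ \ {p, q}).filter
        (fun j : Fin N => (θ j - θ p) ^ 2 < (θ j - θ q) ^ 2)).card <
    ((Finset.univ \ {p, q}).filter
        (fun j : Fin N => (θ j - θ q) ^ 2 < (θ j - θ p) ^ 2)).card := by
  have hpq : p ⋖ q := Fin.covBy_of_val_eq_add_one hq
  rw [filter_sdiff_pair_sq_sub_lt_left_eq_Iio hθ hpq,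
    filter_sdiff_pair_sq_sub_lt_right_eq_Ioi hθ hpq, Fin.card_Iio, Fin.card_Ioi]
  have hpm : (p : ℕ) < m := hp
  omega

/-- Deviation argument in Proposition 1. Let `N ≥ 3` be odd with strictly ordered
types, `m` the median index (`2 * m + 1 = N`), `p < m` a proposer strictly left of
the median, and `q` the next agent (`q = p + 1`). Among the voters
`V = univ \ {p, q}`, strictly more voters strictly prefer `θ q` to `θ p` than the
other way around: the deviating proposal `θ q` wins the pairwise majority vote
against `θ p`. -/
theorem stmt12 (N : ℕ) (hN3 : 3 ≤ N) (hN : Odd N) (θ : Fin N → ℝ) (hθ : StrictMono θ)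
    (m : Fin N) (hm : 2 * (m : ℕ) + 1 = N)
    (p q : Fin N) (hp : p < m) (hq : (q : ℕ) = (p : ℕ) + 1) :
    ((Finset.univ \ {p, q}).filter
        (fun j : Fin N => (θ j - θ p) ^ 2 < (θ j - θ q) ^ 2)).card <
    ((Finset.univ \ {p, q}).filter
        (fun j : Fin N => (θ j - θ q) ^ 2 < (θ j - θ p) ^ 2)).card :=
  stmt12_general N θ hθ m hm p q hp hq
end

section
/- Consider four agents with peaks θ_1 = −4, θ_2 = −3, θ_3 = 3, θ_4 = 4, where agents 1 and 4 propose their own peaks and agents 2 and 3 vote. Then agent 2 has no profitable deviation to proposal-making: (i) agent 2's expected utility from voting is −(1/2)((θ_1 − θ_2)² + (θ_4 − θ_2)²) = −25; (ii) if agent 2 proposes any x̃ that is not strictly closer to θ_3 = 3 than θ_4 = 4 is, then θ_4 is implemented with probability at least 2/3 and agent 2's expected utility is at most −(2/3)(θ_4 − θ_2)² = −98/3 < −25; (iii) if agent 2 proposes any x̃ strictly closer to θ_3 than θ_4, then x̃ > 2θ_3 − θ_4 = 2 and agent 2's expected utility is at most −(1/3)((x̃ − θ_2)² + (θ_4 −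 θ_2)²) < −99/3 < −25. By the symmetric argument, agent 3 has no profitable deviation either. -/
/-!
With the voter at `3`, the proposal `4` beats `-4`, costing agent 2 a utility of `-49` in that
pairing. A proposal `x` within distance `1` of `3` beats both `-4` and `4`, so the expected
utility is `(-49 - 2 (x + 3)²) / 3` with `x > 2`; any other `x` loses to (or ties with) `4`.
Agent 3's problem is the mirror image of agent 2's under `x ↦ -x`.
-/

/-- Utility for an agent of type `t` when proposals `a` and `b` are put to a vote
decided by a single (pivotal/median) voter of type `v`: the proposal closer to `v`
wins; a tie is resolved by a fair coin flip. -/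
noncomputable def euPair (t v a b : ℝ) : ℝ :=
  if |a - v| < |b - v| then -(a - t) ^ 2
  else if |b - v| < |a - v| then -(b - t) ^ 2
  else (-(a - t) ^ 2 + -(b - t) ^ 2) / 2

/-- Expected utility for an agent of type `t` when three proposals `p, q, r` are
made, two of them are selected uniformly at random (each unordered pair with
probability 1/3) and put to a vote decided by the voter of type `v`. -/
noncomputable def eu3 (t v p q r : ℝ) : ℝ :=
  (euPair t v p q + euPair t v p r + euPair t v q r) / 3

theorem euPair_of_lt {t v a b : ℝ} (h : |a - v| < |b - v|) :
    euPair t v a b = -(a - t) ^ 2 :=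
  if_pos h

theorem euPair_of_eq {t v a b : ℝ} (h : |a - v| = |b - v|) :
    euPair t v a b = (-(a - t) ^ 2 + -(b - t) ^ 2) / 2 := by
  simp [euPair, h]

theorem euPair_nonpos (t v a b : ℝ) : euPair t v a b ≤ 0 := by
  unfold euPair
  split_ifs <;> nlinarith [sq_nonneg (a - t), sq_nonneg (b - t)]

theorem euPair_comm (t v a b : ℝ) : euPair t v a b = euPair t v b a := by
  unfold euPair
  split_ifs <;> linarith

theorem euPair_neg (t v a b : ℝ) : euPair (-t) (-v) (-a) (-b) = euPair t v a b := by
  simp only [euPair, neg_sub_neg, abs_sub_comm v, sub_sq_comm t]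

theorem eu3_comm_left (t v p q r : ℝ) : eu3 t v p q r = eu3 t v q p r := by
  simp only [eu3, euPair_comm t v p q]
  ring

theorem eu3_neg (t v p q r : ℝ) : eu3 (-t) (-v) (-p) (-q) (-r) = eu3 t v p q r := by
  simp only [eu3, euPair_neg]

theorem euPair_neg_four_four : euPair (-3) 3 (-4) 4 = -49 := by
  rw [euPair_comm, euPair_of_lt (by norm_num)]
  norm_num

theorem euPair_neg_four_of_abs_sub_three_le {x : ℝ} (hx : |x - 3| ≤ 1) :
    euPair (-3) 3 (-4) x = -(x + 3) ^ 2 := by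
  rw [euPair_comm, euPair_of_lt (by norm_num; linarith), sub_neg_eq_add]

theorem eu3_le_of_not_closer {x : ℝ} (hx : ¬ |x - 3| < |(4 : ℝ) - 3|) :
    eu3 (-3) 3 (-4) 4 x ≤ -(2 / 3) * ((4 : ℝ) - (-3)) ^ 2 := by
  norm_num at hx
  have h4x := euPair_nonpos (-3) 3 (-4) x
  rcases hx.lt_or_eq with hfar | htie
  · have h4 : euPair (-3) 3 4 x = -49 := by rw [euPair_of_lt (by norm_num; linarith)]; norm_num
    simp only [eu3, euPair_neg_four_four, h4]
    linarith
  -- a tie with `4` means `x ∈ {2, 4}`, still at distance at least `5` from agent 2's peak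
  · have hx2 : 2 ≤ x := by linarith [(abs_le.mp htie.ge).1]
    rw [eu3, euPair_neg_four_four, euPair_neg_four_of_abs_sub_three_le htie.ge,
      euPair_of_eq (by norm_num; exact htie)]
    nlinarith

theorem eu3_eq_of_closer {x : ℝ} (hx : |x - 3| < |(4 : ℝ) - 3|) :
    eu3 (-3) 3 (-4) 4 x = (-49 - 2 * (x + 3) ^ 2) / 3 := by
  have hnear : |x - 3| ≤ 1 := by norm_num at hx; exact hx.le
  rw [eu3, euPair_neg_four_four, euPair_neg_four_of_abs_sub_three_le hnear, euPair_comm,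
    euPair_of_lt hx, sub_neg_eq_add]
  ring

/-- Voter part of the counterexample with peaks `θ_1 = -4, θ_2 = -3, θ_3 = 3,
θ_4 = 4`, where agents 1 and 4 propose their own peaks and agents 2, 3 vote.
Agent 2 has no profitable deviation to proposal-making:
(i) agent 2's expected utility from voting is `-(1/2)((θ_1-θ_2)^2 + (θ_4-θ_2)^2) = -25`;
(ii) if agent 2 proposes any `x̃` not strictly closer to `θ_3 = 3` than `θ_4 = 4`
(the remaining voter being agent 3), the expected utility is at most
`-(2/3)(θ_4 - θ_2)^2 = -98/3 < -25`;
(iii) if agent 2 proposes any `x̃` strictly closer to `θ_3` than `θ_4`, then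
`x̃ > 2θ_3 - θ_4 = 2`, and the expected utility is at most
`-(1/3)((x̃ - θ_2)^2 + (θ_4 - θ_2)^2)` and strictly below `-99/3 < -25`.
By the symmetric argument, agent 3 (peak 3, remaining voter agent 2) has no
profitable deviation either. -/
theorem stmt14 :
    -- (i) agent 2's expected utility from voting
    (-(1 / 2) * (((-4 : ℝ) - (-3)) ^ 2 + ((4 : ℝ) - (-3)) ^ 2) = -25) ∧
    -- (ii) proposals not strictly closer to θ₃ than θ₄
    (∀ x : ℝ, ¬ |x - 3| < |(4 : ℝ) - 3| →
      eu3 (-3) 3 (-4) 4 x ≤ -(2 / 3) * ((4 : ℝ) - (-3)) ^ 2) ∧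
    (-(2 / 3) * ((4 : ℝ) - (-3)) ^ 2 = -98 / 3 ∧ (-98 / 3 : ℝ) < -25) ∧
    -- (iii) proposals strictly closer to θ₃ than θ₄
    (∀ x : ℝ, |x - 3| < |(4 : ℝ) - 3| →
      2 < x ∧
      eu3 (-3) 3 (-4) 4 x ≤ -(1 / 3) * ((x - (-3)) ^ 2 + ((4 : ℝ) - (-3)) ^ 2) ∧
      eu3 (-3) 3 (-4) 4 x < -99 / 3) ∧
    ((-99 / 3 : ℝ) < -25) ∧
    -- symmetric claim: agent 3 has no profitable deviation either
    (-(1 / 2) * (((-4 : ℝ) - 3) ^ 2 + ((4 : ℝ) - 3) ^ 2) = -25) ∧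
    (∀ x : ℝ, eu3 3 (-3) (-4) 4 x < -25) := by
  have closer {x : ℝ} (hx : |x - 3| < |(4 : ℝ) - 3|) :
      2 < x ∧ eu3 (-3) 3 (-4) 4 x ≤ -(1 / 3) * ((x - (-3)) ^ 2 + ((4 : ℝ) - (-3)) ^ 2) ∧
        eu3 (-3) 3 (-4) 4 x < -99 / 3 := by
    have hx2 : 2 < x := by norm_num at hx; linarith [(abs_lt.mp hx).1]
    rw [eu3_eq_of_closer hx]
    exact ⟨hx2, by nlinarith, by nlinarith⟩
  refine ⟨by norm_num, fun x => eu3_le_of_not_closer, by norm_num, fun x => closer,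
    by norm_num, by norm_num, fun x => ?_⟩
  rw [← eu3_neg, eu3_comm_left, neg_neg, neg_neg]
  by_cases hx : |-x - 3| < |(4 : ℝ) - 3|
  · linarith [(closer hx).2.2]
  · linarith [eu3_le_of_not_closer hx]
end
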